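/- arXiv:2406.05743 — 3 statements merged into one kernel-verified Lean document; each statement's English description precedes it below -/
import Mathlib

section
/- The set function f(S) = Σ_{m∈M} w(m) · E[min{Σ_{v∈S} I(p_{v,m}), N}] is submodular: for all X ⊆ Y ⊆ V and v ∉ Y, f(X ∪ {v}) − f(X) ≥ f(Y ∪ {v}) − f(Y). -/
/-- Expectation of `h` applied to the number of successes among independent Bernoulli
trials with success probabilities `p v`, `v ∈ S`. -/
noncomputable def expTrunc {ι : Type*} [DecidableEq ι] (p : ι → ℝ) (S : Finset ι)
    (h : ℕ → ℝ) : ℝ :=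
  ∑ T ∈ S.powerset, ((∏ v ∈ T, p v) * ∏ v ∈ S \ T, (1 - p v)) * h T.card

lemma expTrunc_sub {ι : Type*} [DecidableEq ι] (p : ι → ℝ) (S : Finset ι) (h1 h2 : ℕ → ℝ) :
    expTrunc p S (fun k => h1 k - h2 k) = expTrunc p S h1 - expTrunc p S h2 := by
  unfold expTrunc
  rw [← Finset.sum_sub_distrib]
  exact Finset.sum_congr rfl fun T _ => by ring

lemma expTrunc_nonpos {ι : Type*} [DecidableEq ι] (p : ι → ℝ)
    (hp : ∀ v, 0 ≤ p v ∧ p v ≤ 1)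
    (S : Finset ι) (h : ℕ → ℝ) (hh : ∀ k, h k ≤ 0) : expTrunc p S h ≤ 0 := by
  apply Finset.sum_nonpos
  intro T hT
  have w1 : 0 ≤ ∏ v ∈ T, p v := Finset.prod_nonneg fun v _ => (hp v).1
  have w2 : 0 ≤ ∏ v ∈ S \ T, (1 - p v) :=
    Finset.prod_nonneg fun v _ => by linarith [(hp v).2]
  exact mul_nonpos_of_nonneg_of_nonpos (mul_nonneg w1 w2) (hh T.card)

lemma expTrunc_insert {ι : Type*} [DecidableEq ι] (p : ι → ℝ) (S : Finset ι) (u : ι)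
    (hu : u ∉ S) (h : ℕ → ℝ) :
    expTrunc p (insert u S) h
      = p u * expTrunc p S (fun k => h (k + 1)) + (1 - p u) * expTrunc p S h := by
  unfold expTrunc
  rw [Finset.powerset_insert, Finset.sum_union, Finset.sum_image, Finset.mul_sum,
    Finset.mul_sum]
  · rw [add_comm]
    congr 1
    · -- subsets containing u
      apply Finset.sum_congr rfl
      intro T hT
      have hTS : T ⊆ S := Finset.mem_powerset.mp hT
      have huT : u ∉ T := fun hmem => hu (hTS hmem)
      have h1 : (insert u S) \ (insert u T) = S \ T := by
        ext x
        simp only [Finset.mem_sdiff, Finset.mem_insert, not_or]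
        constructor
        · rintro ⟨h1 | h1, h2, h3⟩
          · exact absurd h1 h2
          · exact ⟨h1, h3⟩
        · rintro ⟨h1, h2⟩
          exact ⟨Or.inr h1, fun c => hu (c ▸ h1), h2⟩
      rw [h1, Finset.prod_insert huT, Finset.card_insert_of_notMem huT]
      ring
    · -- subsets not containing u
      apply Finset.sum_congr rfl
      intro T hT
      have hTS : T ⊆ S := Finset.mem_powerset.mp hT
      have huT : u ∉ T := fun hmem => hu (hTS hmem)
      have : (insert u S) \ T = insert u (S \ T) := by
        ext x
        simp only [Finset.mem_sdiff, Finset.mem_insert]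
        constructor
        · rintro ⟨h1 | h1, h2⟩
          · exact Or.inl h1
          · exact Or.inr ⟨h1, h2⟩
        · rintro (rfl | ⟨h1, h2⟩)
          · exact ⟨Or.inl rfl, fun c => huT c⟩
          · exact ⟨Or.inr h1, h2⟩
      rw [this, Finset.prod_insert (by simp [hu])]
      ring
  · intro a ha b hb hab
    have haS : u ∉ a := fun c => hu (Finset.mem_powerset.mp ha c)
    have hbS : u ∉ b := fun c => hu (Finset.mem_powerset.mp hb c)
    ext x
    constructor
    · intro hx
      have : x ∈ insert u a := Finset.mem_insert_of_mem hx
      rw [hab] at this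
      rcases Finset.mem_insert.mp this with rfl | h
      · exact absurd hx haS
      · exact h
    · intro hx
      have : x ∈ insert u b := Finset.mem_insert_of_mem hx
      rw [← hab] at this
      rcases Finset.mem_insert.mp this with rfl | h
      · exact absurd hx hbS
      · exact h
  · -- disjoint
    rw [Finset.disjoint_left]
    intro T hT hT'
    have : u ∉ T := fun c => hu (Finset.mem_powerset.mp hT c)
    obtain ⟨T', hT', rfl⟩ := Finset.mem_image.mp hT'
    exact this (Finset.mem_insert_self u T')

lemma marg_mono {ι : Type*} [DecidableEq ι] (p : ι → ℝ) (hp : ∀ v, 0 ≤ p v ∧ p v ≤ 1)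
    (h : ℕ → ℝ) (hconc : ∀ k, h (k + 2) - 2 * h (k + 1) + h k ≤ 0)
    (S : Finset ι) (u v : ι) (hu : u ∉ S) (hv : v ∉ S) (huv : u ≠ v) :
    expTrunc p (insert v (insert u S)) h - expTrunc p (insert u S) h
      ≤ expTrunc p (insert v S) h - expTrunc p S h := by
  have hvuS : v ∉ insert u S := by simp [hv, Ne.symm huv]
  rw [expTrunc_insert p (insert u S) v hvuS h, expTrunc_insert p S v hv h,
    expTrunc_insert p S u hu h, expTrunc_insert p S u hu (fun k => h (k + 1))]
  set E0 := expTrunc p S h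
  set E1 := expTrunc p S (fun k => h (k + 1))
  set E2 := expTrunc p S (fun k => h (k + 1 + 1))
  have hE2 : E2 - 2 * E1 + E0 ≤ 0 := by
    have key : E2 - 2 * E1 + E0
        = ∑ T ∈ S.powerset, ((∏ x ∈ T, p x) * ∏ x ∈ S \ T, (1 - p x))
            * (h (T.card + 1 + 1) - 2 * h (T.card + 1) + h T.card) := by
      simp only [E0, E1, E2, expTrunc, Finset.mul_sum]
      rw [← Finset.sum_sub_distrib, ← Finset.sum_add_distrib]
      exact Finset.sum_congr rfl fun T _ => by ring
    rw [key]
    apply Finset.sum_nonpos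
    intro T _
    have w1 : 0 ≤ ∏ x ∈ T, p x := Finset.prod_nonneg fun x _ => (hp x).1
    have w2 : 0 ≤ ∏ x ∈ S \ T, (1 - p x) :=
      Finset.prod_nonneg fun x _ => by linarith [(hp x).2]
    have hc : h (T.card + 1 + 1) - 2 * h (T.card + 1) + h T.card ≤ 0 := hconc T.card
    exact mul_nonpos_of_nonneg_of_nonpos (mul_nonneg w1 w2) hc
  have hpu := hp u
  have hpv := hp v
  nlinarith [mul_nonneg hpu.1 hpv.1, hE2, mul_nonpos_of_nonneg_of_nonpos
    (mul_nonneg hpu.1 hpv.1) hE2]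

lemma marg_subset {ι : Type*} [DecidableEq ι] (p : ι → ℝ) (hp : ∀ v, 0 ≤ p v ∧ p v ≤ 1)
    (h : ℕ → ℝ) (hconc : ∀ k, h (k + 2) - 2 * h (k + 1) + h k ≤ 0)
    (X Y : Finset ι) (hXY : X ⊆ Y) (v : ι) (hv : v ∉ Y) :
    expTrunc p (insert v Y) h - expTrunc p Y h
      ≤ expTrunc p (insert v X) h - expTrunc p X h := by
  have key : ∀ D : Finset ι, Disjoint X D → v ∉ X ∪ D →
      expTrunc p (insert v (X ∪ D)) h - expTrunc p (X ∪ D) h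
        ≤ expTrunc p (insert v X) h - expTrunc p X h := by
    intro D
    induction D using Finset.induction_on with
    | empty => intro _ _; simp
    | @insert a D ha ih =>
      intro hdisj hvmem
      have haX : a ∉ X := fun c =>
        (Finset.disjoint_left.mp hdisj c) (Finset.mem_insert_self a D)
      have haXD : a ∉ X ∪ D := by
        simp only [Finset.mem_union, not_or]; exact ⟨haX, ha⟩
      have hav : a ≠ v := by
        rintro rfl
        exact hvmem (Finset.mem_union_right X (Finset.mem_insert_self a D))
      have hvXD : v ∉ X ∪ D := by
        intro c
        rcases Finset.mem_union.mp c with c | c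
        · exact hvmem (Finset.mem_union_left _ c)
        · exact hvmem (Finset.mem_union_right _ (Finset.mem_insert_of_mem c))
      have hins : X ∪ insert a D = insert a (X ∪ D) := Finset.union_insert a X D
      rw [hins]
      calc expTrunc p (insert v (insert a (X ∪ D))) h - expTrunc p (insert a (X ∪ D)) h
          ≤ expTrunc p (insert v (X ∪ D)) h - expTrunc p (X ∪ D) h :=
            marg_mono p hp h hconc (X ∪ D) a v haXD hvXD hav
        _ ≤ _ := ih (Finset.disjoint_of_subset_right (Finset.subset_insert a D) hdisj) hvXD
  have hYeq : X ∪ (Y \ X) = Y := Finset.union_sdiff_of_subset hXY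
  have := key (Y \ X) (Finset.disjoint_sdiff) (by rw [hYeq]; exact hv)
  rwa [hYeq] at this

/-- `f(S) = ∑_{m∈M} w(m) · E[min{∑_{v∈S} I(p_{v,m}), N}]` is submodular:
for all `X ⊆ Y ⊆ V` and `v ∉ Y`, `f(X ∪ {v}) − f(X) ≥ f(Y ∪ {v}) − f(Y)`. -/
theorem f_submodular {ι μ : Type*} [DecidableEq ι] (V : Finset ι) (M : Finset μ)
    (p : ι → μ → ℝ) (hp : ∀ v m, 0 ≤ p v m ∧ p v m ≤ 1)
    (w : μ → ℝ) (hw : ∀ m, 0 ≤ w m) (N : ℕ)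
    (f : Finset ι → ℝ)
    (hf : ∀ S : Finset ι,
      f S = ∑ m ∈ M, w m * expTrunc (fun v => p v m) S (fun y => min (y : ℝ) (N : ℝ)))
    (X Y : Finset ι) (hXY : X ⊆ Y) (hYV : Y ⊆ V)
    (v : ι) (hvV : v ∈ V) (hv : v ∉ Y) :
    f (insert v Y) - f Y ≤ f (insert v X) - f X := by
  have hconc : ∀ k : ℕ, min ((k + 2 : ℕ) : ℝ) (N : ℝ) - 2 * min ((k + 1 : ℕ) : ℝ) (N : ℝ)
      + min ((k : ℕ) : ℝ) (N : ℝ) ≤ 0 := by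
    intro k
    push_cast
    rcases le_total ((k : ℝ) + 1) (N : ℝ) with hle | hle
    · have h1 : min ((k : ℝ) + 1) (N : ℝ) = (k : ℝ) + 1 := min_eq_left hle
      have h0 : min ((k : ℝ)) (N : ℝ) = (k : ℝ) := min_eq_left (by linarith)
      have h2 := min_le_left ((k : ℝ) + 2) (N : ℝ)
      rw [h1, h0]; linarith
    · have h1 : min ((k : ℝ) + 1) (N : ℝ) = (N : ℝ) := min_eq_right hle
      have h2 : min ((k : ℝ) + 2) (N : ℝ) = (N : ℝ) := min_eq_right (by linarith)
      have h0 := min_le_right ((k : ℝ)) (N : ℝ)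
      rw [h1, h2]; linarith
  rw [hf, hf, hf, hf, ← Finset.sum_sub_distrib, ← Finset.sum_sub_distrib]
  apply Finset.sum_le_sum
  intro m _
  have hkey := marg_subset (fun u => p u m) (fun u => hp u m)
    (fun y => min (y : ℝ) (N : ℝ)) hconc X Y hXY v hv
  have := mul_le_mul_of_nonneg_left hkey (hw m)
  linarith [this]
end

section
/- The backtracking deconvolution update is correct: if v_i ∈ X has Bernoulli parameter p < 1 and D^X_j = P(Σ_{v∈X} I_v = j), then the distribution of Σ_{v∈X∖{v_i}} I_v satisfies D^{X∖{v_i}}_0 = D^X_0/(1−p) and D^{X∖{v_i}}_j = (D^X_j − p·D^{X∖{v_i}}_{j−1})/(1−p) for 0 < j < |X|, and D^{X∖{v_i}}_j = 0 for j ≥ |X|. -/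
/-!
Splitting the subsets of `insert a s` according to whether they contain `a` gives the
convolution `D^{insert a s}_{j+1} = (1 - p a) D^s_{j+1} + p a D^s_j`, and `D^Y_0` is the product
of the `1 - p v`. Solving these for the distribution of `X ∖ {v_i}` is possible as soon as
`p v_i ≠ 1`.
-/

/-- `distAt p Y j = P(∑_{v∈Y} I_v = j)` for mutually independent Bernoulli random
variables `I_v` with success probabilities `p v`. -/
noncomputable def distAt {ι : Type*} [DecidableEq ι] (p : ι → ℝ) (Y : Finset ι)
    (j : ℕ) : ℝ :=
  ∑ T ∈ Y.powerset.filter (fun T => T.card = j),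
    (∏ v ∈ T, p v) * ∏ v ∈ Y \ T, (1 - p v)

open Finset

section

variable {ι : Type*} [DecidableEq ι] (p : ι → ℝ)

lemma distAt_eq_sum_powerset_ite (Y : Finset ι) (j : ℕ) :
    distAt p Y j = ∑ T ∈ Y.powerset,
      if #T = j then (∏ v ∈ T, p v) * ∏ v ∈ Y \ T, (1 - p v) else 0 :=
  sum_filter _ _

lemma distAt_zero_eq_prod (Y : Finset ι) : distAt p Y 0 = ∏ v ∈ Y, (1 - p v) := by
  rw [distAt, ← powersetCard_eq_filter, powersetCard_zero, sum_singleton, prod_empty, one_mul,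
    sdiff_empty]

lemma distAt_eq_zero_of_card_lt {Y : Finset ι} {j : ℕ} (h : #Y < j) : distAt p Y j = 0 := by
  rw [distAt, ← powersetCard_eq_filter, powersetCard_eq_empty.2 h, sum_empty]

lemma distAt_insert_succ {s : Finset ι} {a : ι} (ha : a ∉ s) (j : ℕ) :
    distAt p (insert a s) (j + 1) = (1 - p a) * distAt p s (j + 1) + p a * distAt p s j := by
  simp only [distAt_eq_sum_powerset_ite, sum_powerset_insert ha, mul_sum]
  congr 1 <;> refine sum_congr rfl fun T hT => ?_ <;>
    have haT : a ∉ T := fun h => ha (mem_powerset.1 hT h)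
  · rw [insert_sdiff_of_notMem _ haT, prod_insert fun h => ha (mem_sdiff.1 h).1]
    split_ifs <;> ring
  · rw [card_insert_of_notMem haT, prod_insert haT, insert_sdiff_insert,
      sdiff_insert_of_notMem ha]
    simp only [add_left_inj, mul_ite, mul_zero, mul_assoc]

end

theorem deconvolution_update_general {ι : Type*} [DecidableEq ι] (p : ι → ℝ)
    (X : Finset ι)
    (vi : ι) (hvi : vi ∈ X) (hp1 : p vi < 1) :
    distAt p (X.erase vi) 0 = distAt p X 0 / (1 - p vi) ∧
    (∀ j : ℕ, 0 < j → j < X.card →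
      distAt p (X.erase vi) j
        = (distAt p X j - p vi * distAt p (X.erase vi) (j - 1)) / (1 - p vi)) ∧
    (∀ j : ℕ, X.card ≤ j → distAt p (X.erase vi) j = 0) := by
  have hne : 1 - p vi ≠ 0 := by linarith
  refine ⟨?_, ?_, ?_⟩
  · rw [eq_div_iff hne, distAt_zero_eq_prod, distAt_zero_eq_prod, ← mul_prod_erase X _ hvi,
      mul_comm]
  · rintro (_ | k) hk -
    · exact absurd hk (lt_irrefl 0)
    rw [eq_div_iff hne, ← insert_erase hvi, distAt_insert_succ p (notMem_erase vi X),
      erase_insert (notMem_erase vi X), Nat.add_sub_cancel]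
    ring
  · exact fun j hj => distAt_eq_zero_of_card_lt p ((card_erase_lt_of_mem hvi).trans_le hj)

/-- the backtracking deconvolution update is correct: if `v_i ∈ X` has
Bernoulli parameter `p := p(v_i) < 1`, then
`D^{X∖{v_i}}_0 = D^X_0/(1−p)`,
`D^{X∖{v_i}}_j = (D^X_j − p·D^{X∖{v_i}}_{j−1})/(1−p)` for `0 < j < |X|`, and
`D^{X∖{v_i}}_j = 0` for `j ≥ |X|`. -/
theorem deconvolution_update {ι : Type*} [DecidableEq ι] (p : ι → ℝ)
    (hp : ∀ v, 0 ≤ p v ∧ p v ≤ 1) (X : Finset ι) (hX : X.Nonempty)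
    (vi : ι) (hvi : vi ∈ X) (hp1 : p vi < 1) :
    distAt p (X.erase vi) 0 = distAt p X 0 / (1 - p vi) ∧
    (∀ j : ℕ, 0 < j → j < X.card →
      distAt p (X.erase vi) j
        = (distAt p X j - p vi * distAt p (X.erase vi) (j - 1)) / (1 - p vi)) ∧
    (∀ j : ℕ, X.card ≤ j → distAt p (X.erase vi) j = 0) :=
  deconvolution_update_general p X vi hvi hp1
end

section
/- The repair strategy outputs a solution satisfying all pairwise constraints: given a parent p that is an independent set in G and an offspring o, after processing every newly-added bit i (o_i = 1, p_i = 0) by retaining one uniformly random element of Q = {j : (v_i, v_j) ∈ E, o_j = 1} ∪ {i} and zeroing the rest, the returned solution contains no edge of E. -/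
/-!
Every step only switches bits off, and a step at an added bit `k` either drops `k` itself or
keeps it and drops every surviving neighbour of `k`; in both cases no edge at `k` survives.
Hence, as the scan proceeds, the survivors among the processed bits and the bits of the
(independent) parent never span an edge, and at the end every bit has been processed.
-/

variable {α : Type*} {Adj : α → α → Prop}

def ConflictFreeOn (Adj : α → α → Prop) (s : α → Bool) (S : Set α) : Prop :=
  ∀ i ∈ S, ∀ j ∈ S, Adj i j → ¬ (s i = true ∧ s j = true)

theorem ConflictFreeOn.mono {s : α → Bool} {S T : Set α} (h : ConflictFreeOn Adj s S)
    (hTS : T ⊆ S) : ConflictFreeOn Adj s T :=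
  fun i hi j hj => h i (hTS hi) j (hTS hj)

variable [DecidableEq α] [DecidableRel Adj] {p : α → Bool} {c : (α → Bool) → α → α}

variable (Adj p c) in
def repairStep (s : α → Bool) (k : α) : α → Bool :=
  if s k = true ∧ p k = false then
    fun j => if ((Adj k j ∧ s j = true) ∨ j = k) ∧ j ≠ c s k then false else s j
  else s

theorem repairStep_of_not_active {s : α → Bool} {k : α} (hk : ¬ (s k = true ∧ p k = false)) :
    repairStep Adj p c s k = s :=
  if_neg hk

theorem repairStep_le (s : α → Bool) (k : α) : repairStep Adj p c s k ≤ s := by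
  intro x
  unfold repairStep
  split_ifs
  · dsimp only
    split_ifs <;> simp
  · exact le_rfl

theorem repairStep_eq_false_of_adj [Std.Irrefl Adj] {s : α → Bool} {k j : α}
    (hk : s k = true ∧ p k = false) (hkj : Adj k j) (hkeep : repairStep Adj p c s k k = true) :
    repairStep Adj p c s k j = false := by
  simp only [repairStep, if_pos hk] at hkeep ⊢
  have hck : c s k = k := by
    by_contra hne
    simp [Ne.symm hne] at hkeep
  have hjk : j ≠ k := by rintro rfl; exact irrefl j hkj
  cases s j <;> simp [hkj, hck, hjk]

theorem ConflictFreeOn.repairStep [Std.Symm Adj] [Std.Irrefl Adj]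
    {s : α → Bool} {S : Set α} (hpS : ∀ i, p i = true → i ∈ S) (h : ConflictFreeOn Adj s S)
    (k : α) : ConflictFreeOn Adj (_root_.repairStep Adj p c s k) (insert k S) := by
  by_cases hk : s k = true ∧ p k = false
  · have hle := repairStep_le (Adj := Adj) (p := p) (c := c) s k
    rintro i hi j hj hij ⟨hri, hrj⟩
    rcases eq_or_ne i k with rfl | hik
    · simp [repairStep_eq_false_of_adj hk hij hri] at hrj
    rcases eq_or_ne j k with rfl | hjk
    · simp [repairStep_eq_false_of_adj hk (symm_of Adj hij) hrj] at hri
    exact h i (hi.resolve_left hik) j (hj.resolve_left hjk) hij ⟨hle i hri, hle j hrj⟩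
  · rw [repairStep_of_not_active hk]
    have hmem : ∀ i ∈ insert k S, s i = true → i ∈ S := by
      rintro i (rfl | hi) hsi
      · exact hpS i (by simpa [hsi] using hk)
      · exact hi
    rintro i hi j hj hij ⟨hsi, hsj⟩
    exact h i (hmem i hi hsi) j (hmem j hj hsj) hij ⟨hsi, hsj⟩

theorem ConflictFreeOn.foldl_repairStep [Std.Symm Adj] [Std.Irrefl Adj]
    {s : α → Bool} {S : Set α} (hpS : ∀ i, p i = true → i ∈ S) (h : ConflictFreeOn Adj s S)
    (L : List α) :
    ConflictFreeOn Adj (L.foldl (_root_.repairStep Adj p c) s) (S ∪ {x | x ∈ L}) := by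
  induction L generalizing s S with
  | nil => simpa using h
  | cons k L ih =>
    refine (ih (fun i hi => Set.mem_insert_of_mem k (hpS i hi))
      (h.repairStep hpS k)).mono ?_
    simp only [Set.subset_def, Set.mem_union, Set.mem_insert_iff, Set.mem_ofPred_eq, List.mem_cons]
    tauto

theorem repair_strategy_feasible_general {n : ℕ} (Adj : Fin n → Fin n → Prop)
    [DecidableRel Adj] (hsymm : Symmetric Adj) (hirr : Irreflexive Adj)
    (p o : Fin n → Bool)
    (hparent : ∀ i j, Adj i j → ¬ (p i = true ∧ p j = true))
    -- the (random) choice of the retained element: always an element of the conflict set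
    (c : (Fin n → Bool) → Fin n → Fin n)
    (r : Fin n → Bool)
    (hr : r = (List.finRange n).foldl
      (fun s i =>
        if s i = true ∧ p i = false then
          (fun j => if ((Adj i j ∧ s j = true) ∨ j = i) ∧ j ≠ c s i then false else s j)
        else s) o) :
    ∀ i j, Adj i j → ¬ (r i = true ∧ r j = true) := by
  subst hr
  have : Std.Symm Adj := ⟨hsymm⟩
  have : Std.Irrefl Adj := ⟨hirr⟩
  have hstart : ConflictFreeOn Adj o {i | p i = true} :=
    fun i hi j hj hij _ => hparent i j hij ⟨hi, hj⟩
  have hend : ConflictFreeOn Adj _ Set.univ :=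
    (hstart.foldl_repairStep (c := c) (fun _ => id) (List.finRange n)).mono
      fun x _ => Or.inr (List.mem_finRange x)
  exact fun i j hij => hend i trivial j trivial hij

/-- the repair strategy outputs a solution satisfying all pairwise
constraints: given a parent `p` that is an independent set of `G` and an offspring `o`,
after scanning bits `i = 1, …, n` in order and, for each newly-added bit
(`o i = true`, `p i = false`), retaining one (arbitrarily/randomly chosen) element
`c s i` of the conflict set `Q = {j : (v_i, v_j) ∈ E, o j = 1} ∪ {i}` and zeroing the
rest, the returned solution contains no edge of `E`. -/
theorem repair_strategy_feasible {n : ℕ} (Adj : Fin n → Fin n → Prop)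
    [DecidableRel Adj] (hsymm : Symmetric Adj) (hirr : Irreflexive Adj)
    (d : ℕ) (hdeg : ∀ i : Fin n, (Finset.univ.filter (fun j => Adj i j)).card ≤ d)
    (p o : Fin n → Bool)
    (hparent : ∀ i j, Adj i j → ¬ (p i = true ∧ p j = true))
    -- the (random) choice of the retained element: always an element of the conflict set
    (c : (Fin n → Bool) → Fin n → Fin n)
    (hc : ∀ s i, c s i = i ∨ (Adj i (c s i) ∧ s (c s i) = true))
    (r : Fin n → Bool)
    (hr : r = (List.finRange n).foldl
      (fun s i =>
        if s i = true ∧ p i = false then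
          (fun j => if ((Adj i j ∧ s j = true) ∨ j = i) ∧ j ≠ c s i then false else s j)
        else s) o) :
    ∀ i j, Adj i j → ¬ (r i = true ∧ r j = true) :=
  repair_strategy_feasible_general Adj hsymm hirr p o hparent c r hr
end
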